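/- If A_1 and A_2 are two 2×2 unitary matrices, each of the form (1/√3)[[e^{iθ_1}, √2 e^{iθ_2}],[√2 e^{iθ_3}, e^{i(θ_1+π/2)}]] with θ_2 + θ_3 − 2θ_1 ≡ 3π/2 (mod 2π), then the product A_1 A_2 is not of this form (i.e., its entries cannot be written as (1/√3) e^{iθ'_1}, (√2/√3) e^{iθ'_2}, (√2/√3) e^{iθ'_3}, (1/√3) e^{i(θ'_1+π/2)} with θ'_2+θ'_3−2θ'_1 ≡ 3π/2 mod 2π); in particular, the absolute values of the diagonal entries of A_1A_2 are not both 1/√3 together with off-diagonal absolute values √2/√3 in the required pattern. -/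
import Mathlib


open Matrix Complex

noncomputable section

/-- The matrix `(1/√3) [[e^{iθ₁}, √2 e^{iθ₂}], [√2 e^{iθ₃}, e^{i(θ₁+π/2)}]]`. -/
def formMat (θ₁ θ₂ θ₃ : ℝ) : Matrix (Fin 2) (Fin 2) ℂ :=
  (Real.sqrt 3 : ℂ)⁻¹ •
    !![Complex.exp (θ₁ * Complex.I), (Real.sqrt 2 : ℂ) * Complex.exp (θ₂ * Complex.I);
       (Real.sqrt 2 : ℂ) * Complex.exp (θ₃ * Complex.I),
       Complex.exp ((θ₁ + Real.pi / 2) * Complex.I)]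

/-- The unitarity condition `θ₂ + θ₃ − 2θ₁ ≡ 3π/2 (mod 2π)`. -/
def formCond (θ₁ θ₂ θ₃ : ℝ) : Prop :=
  ∃ k : ℤ, θ₂ + θ₃ - 2 * θ₁ = 2 * k * Real.pi + 3 * Real.pi / 2

/-- If `A₁` and `A₂` are two unitary matrices of the special form (each satisfying the
phase condition), then `A₁A₂` is not of this form: its entries cannot be written as
`(1/√3)e^{iθ'₁}, (√2/√3)e^{iθ'₂}, (√2/√3)e^{iθ'₃}, (1/√3)e^{i(θ'₁+π/2)}` with
`θ'₂ + θ'₃ − 2θ'₁ ≡ 3π/2 (mod 2π)`. -/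
theorem product_not_of_form (a₁ a₂ a₃ b₁ b₂ b₃ : ℝ)
    (h₁ : formCond a₁ a₂ a₃) (h₂ : formCond b₁ b₂ b₃) :
    ¬ ∃ c₁ c₂ c₃ : ℝ,
        formMat a₁ a₂ a₃ * formMat b₁ b₂ b₃ = formMat c₁ c₂ c₃ ∧ formCond c₁ c₂ c₃ := by
  rintro ⟨c₁, c₂, c₃, hM, -⟩
  obtain ⟨k, hk⟩ := h₁
  obtain ⟨l, hl⟩ := h₂
  have h00 := congrFun (congrFun hM 0) 0
  have h11 := congrFun (congrFun hM 1) 1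
  simp [formMat, Matrix.mul_apply, Fin.sum_univ_two, Matrix.smul_apply] at h00 h11
  -- basic facts
  have hs3 : (Real.sqrt 3 : ℂ) * (Real.sqrt 3 : ℂ) = 3 := by
    have : Real.sqrt 3 * Real.sqrt 3 = 3 := Real.mul_self_sqrt (by norm_num)
    exact_mod_cast this
  have hs2 : (Real.sqrt 2 : ℂ) * (Real.sqrt 2 : ℂ) = 2 := by
    have : Real.sqrt 2 * Real.sqrt 2 = 2 := Real.mul_self_sqrt (by norm_num)
    exact_mod_cast this
  have hsne : (Real.sqrt 3 : ℂ) ≠ 0 := by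
    simp only [ne_eq, Complex.ofReal_eq_zero]
    positivity
  have hti : ((Real.sqrt 3 : ℝ) : ℂ)⁻¹ = ((Real.sqrt 3 : ℝ) : ℂ) / 3 := by
    field_simp
    linear_combination -hs3
  rw [hti] at h00 h11
  have hA : ∀ x y : ℝ, cexp ((x:ℂ)*I) * cexp ((y:ℂ)*I) = cexp ((↑(x+y))*I) := by
    intro x y; rw [← Complex.exp_add]; push_cast; ring_nf
  have hU : ∀ x : ℝ, cexp ((x:ℂ)*I) * cexp ((↑(-x))*I) = 1 := by
    intro x
    rw [← Complex.exp_add]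
    have h : (x:ℂ)*I + (↑(-x))*I = 0 := by push_cast; ring
    rw [h, Complex.exp_zero]
  have hconj : ∀ x : ℝ, (starRingEnd ℂ) (cexp ((x:ℂ)*I)) = cexp ((↑(-x))*I) := by
    intro x
    rw [← Complex.exp_conj]
    congr 1
    simp [Complex.conj_ofReal]
  have hPiI : cexp ((↑(Real.pi/2) : ℂ) * I) = I := by
    rw [Complex.exp_mul_I, ← Complex.ofReal_cos, ← Complex.ofReal_sin,
      Real.cos_pi_div_two, Real.sin_pi_div_two]
    simp
  have hB : cexp (((a₁:ℂ) + ↑Real.pi/2)*I) * cexp (((b₁:ℂ) + ↑Real.pi/2)*I)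
      = - cexp ((↑(a₁+b₁))*I) := by
    rw [← Complex.exp_add]
    have h : ((a₁:ℂ) + ↑Real.pi/2)*I + ((b₁:ℂ) + ↑Real.pi/2)*I = (↑(a₁+b₁))*I + ↑Real.pi*I := by
      push_cast; ring
    rw [h, Complex.exp_add, Complex.exp_pi_mul_I]; ring
  have hC : cexp (((c₁:ℂ) + ↑Real.pi/2)*I) = I * cexp ((c₁:ℂ)*I) := by
    have h : ((c₁:ℂ) + ↑Real.pi/2)*I = (c₁:ℂ)*I + (↑(Real.pi/2))*I := by push_cast; ring
    rw [h, Complex.exp_add, hPiI]; ring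
  set s : ℂ := ((Real.sqrt 3 : ℝ) : ℂ) with hsdef
  set p : ℂ := cexp ((↑(a₁+b₁))*I) with hpdef
  set q : ℂ := cexp ((↑(a₂+b₃))*I) with hqdef
  set r : ℂ := cexp ((↑(a₃+b₂))*I) with hrdef
  set w : ℂ := cexp ((c₁:ℂ)*I) with hwdef
  set cp : ℂ := cexp ((↑(-(a₁+b₁)))*I) with hcpdef
  set cq : ℂ := cexp ((↑(-(a₂+b₃)))*I) with hcqdef
  set cw : ℂ := cexp ((↑(-c₁))*I) with hcwdef
  have hp : p * cp = 1 := hU _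
  have hq : q * cq = 1 := hU _
  have hw : w * cw = 1 := hU _
  have eq1 : p + 2*q = s * w := by
    linear_combination 3*h00
      - ((cexp ((a₁:ℂ)*I)*cexp ((b₁:ℂ)*I)
          + ((Real.sqrt 2:ℝ):ℂ)*((Real.sqrt 2:ℝ):ℂ)*cexp ((a₂:ℂ)*I)*cexp ((b₃:ℂ)*I))/3)*hs3
      - hA a₁ b₁ - cexp ((a₂:ℂ)*I)*cexp ((b₃:ℂ)*I)*hs2 - 2*(hA a₂ b₃)
  have eq2 : 2*r - p = s * (I * w) := by
    linear_combination 3*h11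
      - ((((Real.sqrt 2:ℝ):ℂ)*((Real.sqrt 2:ℝ):ℂ)*cexp ((a₃:ℂ)*I)*cexp ((b₂:ℂ)*I)
          + cexp (((a₁:ℂ) + ↑Real.pi/2)*I) * cexp (((b₁:ℂ) + ↑Real.pi/2)*I))/3)*hs3
      - cexp ((a₃:ℂ)*I)*cexp ((b₂:ℂ)*I)*hs2 - 2*(hA a₃ b₂) - hB + s*hC
  have eq3 : q * r = -(p*p) := by
    rw [hqdef, hrdef, hpdef, ← Complex.exp_add, ← Complex.exp_add]
    have hreal : (a₂+b₃) + (a₃+b₂) = ((a₁+b₁) + (a₁+b₁)) + ((k+l+1)*(2*Real.pi) + Real.pi) := by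
      linarith [hk, hl]
    have hcast : (↑(a₂+b₃):ℂ)*I + (↑(a₃+b₂))*I
        = ((↑(a₁+b₁):ℂ)*I + (↑(a₁+b₁))*I) + ((((k+l+1 : ℤ)):ℂ)*(2*(Real.pi:ℂ)*I) + (Real.pi:ℂ)*I) := by
      have h := congrArg (fun x : ℝ => (x:ℂ) * I) hreal
      push_cast at h ⊢
      linear_combination h
    rw [hcast]
    simp only [Complex.exp_add]
    rw [Complex.exp_int_mul_two_pi_mul_I, Complex.exp_pi_mul_I]
    ring
  have hc1 : cp + 2*cq = s * cw := by
    have e := congrArg (starRingEnd ℂ) eq1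
    simp only [map_add, _root_.map_mul, map_ofNat, Complex.conj_ofReal, hpdef, hqdef, hwdef,
      hconj, hsdef] at e
    rw [hcpdef, hcqdef, hcwdef]
    exact e
  have hI2 : (I:ℂ) * I = -1 := Complex.I_mul_I
  have e5 : 2*r = (1+I)*p + 2*I*q := by linear_combination eq2 - I*eq1
  have e6 : q*((1+I)*p + 2*I*q) = -(2*(p*p)) := by linear_combination 2*eq3 - q*e5
  have hz1 : (q*cp)*(cq*p) = 1 := by linear_combination cp*p*hq + hp
  have hz2 : q*cp + cq*p = -1 := by
    linear_combination ((cp+2*cq)*eq1 + s*w*hc1 + w*cw*hs3 + 3*hw - hp - 4*hq)/2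
  have e7 : (1+I)*(q*cp) + 2*I*(q*cp)*(q*cp) = -2 := by
    linear_combination cp*cp*e6 - ((1+I)*q*cp + 2*(1+p*cp))*hp
  have hzq : (q*cp)*(q*cp) + (q*cp) + 1 = 0 := by
    linear_combination (q*cp)*hz2 - hz1
  have hz : q*cp = -2 := by
    linear_combination ((1+I)/2)*e7 - ((1+I)*I)*hzq + (q*cp/2+1)*hI2
  rw [hz] at hzq
  norm_num at hzq
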